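/- If β ≠ 0, then M_{0,α,β} is an irreducible conformal module over the Heisenberg-Virasoro conformal algebra: its only conformal submodules are 0 and itself. -/

import Mathlib

open Polynomial

/- The rank-one conformal module M_{0,α,β} = ℂ[∂]v over the Heisenberg-Virasoro
conformal algebra is identified with ℂ[X] (X = ∂); with λ the outer variable of
ℂ[∂][λ], the actions are L_λ(f(∂)v) = (∂+α) f(∂+λ) v, H_λ(f(∂)v) = β f(∂+λ) v. -/

/-- Substitution f(∂) ↦ f(∂+λ) in ℂ[∂][λ]. -/
noncomputable def shP (f : Polynomial ℂ) : Polynomial (Polynomial ℂ) :=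
  Polynomial.aeval (Polynomial.C Polynomial.X + Polynomial.X) f

/-- λ-action of L on M_{0,α,β}: L_λ(f(∂)v) = (∂ + α) f(∂+λ) v. -/
noncomputable def LA (α : ℂ) (f : Polynomial ℂ) : Polynomial (Polynomial ℂ) :=
  Polynomial.C (Polynomial.X + Polynomial.C α) * shP f

/-- λ-action of H on M_{0,α,β}: H_λ(f(∂)v) = β f(∂+λ) v. -/
noncomputable def HA (β : ℂ) (f : Polynomial ℂ) : Polynomial (Polynomial ℂ) :=
  Polynomial.C (Polynomial.C β) * shP f

lemma shP_eq_taylor (f : ℂ[X]) : shP f = taylor X (f.map C) := by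
  rw [shP, taylor_apply, comp_eq_aeval, ← algebraMap_eq (R := ℂ), aeval_map_algebraMap, add_comm]

lemma coeff_shP_natDegree (f : ℂ[X]) : (shP f).coeff f.natDegree = C f.leadingCoeff := by
  rw [shP_eq_taylor, ← natDegree_map_eq_of_injective C_injective f, coeff_taylor_natDegree,
    leadingCoeff_map_of_injective C_injective]

lemma coeff_HA_natDegree (β : ℂ) (f : ℂ[X]) :
    (HA β f).coeff f.natDegree = C (β * f.leadingCoeff) := by
  rw [HA, coeff_C_mul, coeff_shP_natDegree, C_mul]

theorem M_zero_alpha_beta_irreducible (α β : ℂ) (hβ : β ≠ 0) :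
    ∀ W : Submodule (Polynomial ℂ) (Polynomial ℂ),
      (∀ f ∈ W, ∀ j : ℕ, (LA α f).coeff j ∈ W ∧ (HA β f).coeff j ∈ W) →
      W = ⊥ ∨ W = ⊤ := by
  intro W hW
  refine or_iff_not_imp_left.2 fun hW0 => ?_
  obtain ⟨f, hfW, hf0⟩ := W.ne_bot_iff.1 hW0
  have hmem : C (β * f.leadingCoeff) ∈ W := coeff_HA_natDegree β f ▸ (hW f hfW _).2
  have hunit : IsUnit (C (β * f.leadingCoeff)) :=
    isUnit_C.2 (mul_ne_zero hβ (leadingCoeff_ne_zero.2 hf0)).isUnit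
  exact Ideal.eq_top_of_isUnit_mem W hmem hunit
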